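/- Let t be a positive integer and let H = ⟨a, b | a^(3^(t+1)) = b^(3^(t+1)) = 1, b^(-1)ab = a^(1+3^t)⟩. Then the map sending a to a^(2·3^t + 1)b^(-3) and b to a^(2·3^t + 1)b^(-2) extends to an automorphism of H. -/

import Mathlib

/-!
Write elements of `H` as `b^y a^x` with `x, y ∈ ℤ/3^(t+1)`. Since `m = 3^t` has `m² ≡ 0`, conjugation
by `b^w` multiplies exponents of `a` by `(1 + m)^w = 1 + w m`, so
`(b^y a^x)(b^w a^z) = b^(y+w) a^(x(1+wm)+z)`, and every identity between such words is a polynomial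
identity in `m` modulo `3m` and `m²`. This shows that `A = a^(2m+1) b^(-3)` and `B = a^(2m+1) b^(-2)`
satisfy the defining relations of `H`, so `a ↦ A, b ↦ B` is an endomorphism. It is surjective because
`A⁻¹B = b` and `b²B = a`, and `H` is finite (of order at most `3^(2t+2)`), so it is bijective.
-/

/-- Relations for the group `⟨a, b | a^(3^(t+1)) = b^(3^(t+1)) = 1, b⁻¹ab = a^(1+3^t)⟩`,
with generator `0` playing the role of `a` and `1` the role of `b`. -/
def hRels (t : ℕ) : Set (FreeGroup (Fin 2)) :=
  { FreeGroup.of 0 ^ 3 ^ (t + 1), FreeGroup.of 1 ^ 3 ^ (t + 1),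
    (FreeGroup.of 1)⁻¹ * FreeGroup.of 0 * FreeGroup.of 1 *
      (FreeGroup.of 0 ^ (1 + 3 ^ t))⁻¹ }

theorem one_add_pow_of_mul_self_eq_zero {R : Type*} [CommRing R] {x : R} (hx : x * x = 0)
    (n : ℕ) : (1 + x) ^ n = 1 + n * x := by
  induction n with
  | zero => simp
  | succ n ih => rw [pow_succ, ih]; push_cast; linear_combination (n : R) * hx

theorem natCast_choose_two_self_of_odd {N : ℕ} (hN : Odd N) : (N.choose 2 : ZMod N) = 0 := by
  obtain ⟨k, rfl⟩ := hN
  rw [Nat.choose_two_right, Nat.add_sub_cancel,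
    show (2 * k + 1) * (2 * k) = 2 * ((2 * k + 1) * k) by ring, Nat.mul_div_cancel_left _ two_pos,
    Nat.cast_mul, ZMod.natCast_self, zero_mul]

theorem natCast_three_pow_mul_self_eq_zero {t : ℕ} (ht : 0 < t) :
    ((3 ^ t : ℕ) : ZMod (3 ^ (t + 1))) * (3 ^ t : ℕ) = 0 := by
  rw [← Nat.cast_mul, ZMod.natCast_eq_zero_iff, ← pow_add]
  exact pow_dvd_pow 3 (by omega)

theorem three_mul_natCast_three_pow_eq_zero (t : ℕ) :
    (3 : ZMod (3 ^ (t + 1))) * (3 ^ t : ℕ) = 0 := by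
  have h : ((3 * 3 ^ t : ℕ) : ZMod (3 ^ (t + 1))) = 0 := pow_succ' 3 t ▸ ZMod.natCast_self _
  exact_mod_cast h

section Metacyclic

variable {G : Type*} [Group G] {N m : ℕ} {a b : G}

theorem pow_eq_pow_val_natCast {g : G} (hg : g ^ N = 1) (n : ℕ) :
    g ^ n = g ^ (n : ZMod N).val := by
  rw [ZMod.val_natCast, ← pow_eq_pow_mod n hg]

theorem zpow_eq_pow_val_intCast [NeZero N] {g : G} (hg : g ^ N = 1) (k : ℤ) :
    g ^ k = g ^ (k : ZMod N).val := by
  rw [← zpow_natCast, ZMod.val_intCast, ← zpow_eq_zpow_emod' k hg]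

theorem pow_mul_pow_of_inv_mul_mul_eq {r : ℕ} (hr : b⁻¹ * a * b = a ^ r) (k l : ℕ) :
    a ^ k * b ^ l = b ^ l * a ^ (k * r ^ l) := by
  have hb : SemiconjBy b (a ^ r) a := by rw [SemiconjBy, ← hr]; group
  suffices SemiconjBy (b ^ l) (a ^ (k * r ^ l)) (a ^ k) from this.symm
  induction l with
  | zero => simp [SemiconjBy]
  | succ l ih =>
    rw [pow_succ]
    refine ih.mul_left ?_
    have := hb.pow_right (k * r ^ l)
    rwa [← pow_mul, show r * (k * r ^ l) = k * r ^ (l + 1) by ring] at this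

structure SatisfiesMetacyclicRels (N m : ℕ) (a b : G) : Prop where
  pow_left : a ^ N = 1
  pow_right : b ^ N = 1
  inv_mul_mul : b⁻¹ * a * b = a ^ (1 + m)

def normalForm (N : ℕ) (a b : G) (y x : ZMod N) : G := b ^ y.val * a ^ x.val

theorem normalForm_zero : normalForm N a b 0 0 = 1 := by
  simp [normalForm]

namespace SatisfiesMetacyclicRels

theorem pow_mul_pow_eq_normalForm (h : SatisfiesMetacyclicRels N m a b) (j i : ℕ) :
    b ^ j * a ^ i = normalForm N a b j i := by
  rw [normalForm, ← pow_eq_pow_val_natCast h.pow_right, ← pow_eq_pow_val_natCast h.pow_left]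

variable [NeZero N]

theorem normalForm_mul (h : SatisfiesMetacyclicRels N m a b) (hm : (m : ZMod N) * m = 0)
    (y x w z : ZMod N) :
    normalForm N a b y x * normalForm N a b w z =
      normalForm N a b (y + w) (x * (1 + w * m) + z) := by
  calc normalForm N a b y x * normalForm N a b w z
      = b ^ y.val * (a ^ x.val * b ^ w.val) * a ^ z.val := by simp only [normalForm, mul_assoc]
    _ = b ^ (y.val + w.val) * a ^ (x.val * (1 + m) ^ w.val + z.val) := by
      rw [pow_mul_pow_of_inv_mul_mul_eq h.inv_mul_mul]; simp only [pow_add, mul_assoc]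
    _ = _ := by
      rw [h.pow_mul_pow_eq_normalForm]
      push_cast [ZMod.natCast_val, ZMod.cast_id', one_add_pow_of_mul_self_eq_zero hm]
      rfl

theorem normalForm_inv (h : SatisfiesMetacyclicRels N m a b) (hm : (m : ZMod N) * m = 0)
    (y x : ZMod N) :
    (normalForm N a b y x)⁻¹ = normalForm N a b (-y) (-(x * (1 - y * m))) := by
  refine inv_eq_of_mul_eq_one_right ?_
  rw [h.normalForm_mul hm, ← normalForm_zero]
  congr 1 <;> ring

theorem normalForm_pow (h : SatisfiesMetacyclicRels N m a b) (hm : (m : ZMod N) * m = 0)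
    (y x : ZMod N) (e : ℕ) :
    normalForm N a b y x ^ e = normalForm N a b (e * y) (x * (e + y * m * e.choose 2)) := by
  induction e with
  | zero => simp [normalForm_zero]
  | succ e ih =>
    rw [pow_succ, ih, h.normalForm_mul hm, Nat.choose_succ_succ', Nat.choose_one_right]
    congr 1
    · push_cast; ring
    · push_cast; linear_combination x * y ^ 2 * (e.choose 2 : ZMod N) * hm

theorem normalForm_pow_self (h : SatisfiesMetacyclicRels N m a b) (hm : (m : ZMod N) * m = 0)
    (hN : Odd N) (y x : ZMod N) : normalForm N a b y x ^ N = 1 := by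
  rw [h.normalForm_pow hm, ZMod.natCast_self, natCast_choose_two_self_of_odd hN]
  simp [normalForm_zero]

theorem pow_mul_zpow_eq_normalForm (h : SatisfiesMetacyclicRels N m a b)
    (hm : (m : ZMod N) * m = 0) (i : ℕ) (j : ℤ) :
    a ^ i * b ^ j = normalForm N a b j (i * (1 + j * m)) := by
  have ha : a ^ i = normalForm N a b 0 i := by simpa using h.pow_mul_pow_eq_normalForm 0 i
  have hb : b ^ j = normalForm N a b j 0 := by
    simp [normalForm, ← zpow_eq_pow_val_intCast h.pow_right]
  rw [ha, hb, h.normalForm_mul hm]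
  congr 1 <;> ring

theorem exists_normalForm_eq (h : SatisfiesMetacyclicRels N m a b) (hm : (m : ZMod N) * m = 0)
    {g : G} (hg : g ∈ Subgroup.closure {a, b}) : ∃ y x, normalForm N a b y x = g := by
  induction hg using Subgroup.closure_induction with
  | mem g hg =>
    rcases hg with rfl | rfl
    · exact ⟨0, 1, by simpa using (h.pow_mul_pow_eq_normalForm 0 1).symm⟩
    · exact ⟨1, 0, by simpa using (h.pow_mul_pow_eq_normalForm 1 0).symm⟩
  | one => exact ⟨0, 0, normalForm_zero⟩
  | mul g g' _ _ hg hg' =>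
    obtain ⟨⟨y, x, rfl⟩, ⟨w, z, rfl⟩⟩ := And.intro hg hg'
    exact ⟨_, _, (h.normalForm_mul hm y x w z).symm⟩
  | inv g _ hg =>
    obtain ⟨y, x, rfl⟩ := hg
    exact ⟨_, _, (h.normalForm_inv hm y x).symm⟩

theorem finite_of_closure_eq_top (h : SatisfiesMetacyclicRels N m a b)
    (hm : (m : ZMod N) * m = 0) (hab : Subgroup.closure {a, b} = ⊤) : Finite G :=
  Finite.of_surjective (fun p : ZMod N × ZMod N ↦ normalForm N a b p.1 p.2) fun g ↦ by
    obtain ⟨y, x, hyx⟩ := h.exists_normalForm_eq hm (hab ▸ Subgroup.mem_top g)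
    exact ⟨(y, x), hyx⟩

theorem pow_mul_zpow_pair (h : SatisfiesMetacyclicRels N m a b) (hm : (m : ZMod N) * m = 0)
    (h3 : (3 : ZMod N) * m = 0) (hN : Odd N) :
    SatisfiesMetacyclicRels N m (a ^ (2 * m + 1) * b ^ (-3 : ℤ)) (a ^ (2 * m + 1) * b ^ (-2 : ℤ))
    where
  pow_left := by rw [h.pow_mul_zpow_eq_normalForm hm, h.normalForm_pow_self hm hN]
  pow_right := by rw [h.pow_mul_zpow_eq_normalForm hm, h.normalForm_pow_self hm hN]
  inv_mul_mul := by
    simp only [h.pow_mul_zpow_eq_normalForm hm, h.normalForm_inv hm, h.normalForm_mul hm,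
      h.normalForm_pow hm]
    push_cast
    congr 1
    · linear_combination h3
    · set C : ZMod N := (((1 + m).choose 2 : ℕ) : ZMod N)
      linear_combination C * h3 +
        (7 - 3 * C - 6 * m - 18 * m * C - 16 * m ^ 2 + 48 * m ^ 3) * hm

theorem inv_mul_eq_right (h : SatisfiesMetacyclicRels N m a b) (hm : (m : ZMod N) * m = 0) :
    (a ^ (2 * m + 1) * b ^ (-3 : ℤ))⁻¹ * (a ^ (2 * m + 1) * b ^ (-2 : ℤ)) = b := by
  have hb : b = normalForm N a b 1 0 := by simpa using h.pow_mul_pow_eq_normalForm 1 0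
  conv_rhs => rw [hb]
  simp only [h.pow_mul_zpow_eq_normalForm hm, h.normalForm_inv hm, h.normalForm_mul hm]
  push_cast
  congr 1
  · ring
  · linear_combination (9 - 36 * m ^ 2) * hm

theorem sq_mul_eq_left (h : SatisfiesMetacyclicRels N m a b) (hm : (m : ZMod N) * m = 0) :
    b ^ 2 * (a ^ (2 * m + 1) * b ^ (-2 : ℤ)) = a := by
  have ha : a = normalForm N a b 0 1 := by simpa using h.pow_mul_pow_eq_normalForm 0 1
  have hb : b ^ 2 = normalForm N a b 2 0 := by simpa using h.pow_mul_pow_eq_normalForm 2 0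
  conv_rhs => rw [ha]
  rw [hb, h.pow_mul_zpow_eq_normalForm hm, h.normalForm_mul hm]
  push_cast
  congr 1
  · ring
  · linear_combination -4 * hm

end SatisfiesMetacyclicRels

theorem satisfiesMetacyclicRels_iff_lift_eq_one {t : ℕ} :
    SatisfiesMetacyclicRels (3 ^ (t + 1)) (3 ^ t) a b ↔
      ∀ r ∈ hRels t, FreeGroup.lift ![a, b] r = 1 := by
  simp only [hRels, Set.mem_insert_iff, Set.mem_singleton_iff, forall_eq_or_imp, forall_eq,
    map_pow, map_mul, map_inv, FreeGroup.lift_apply_of, Matrix.cons_val_zero,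
    Matrix.cons_val_one, mul_inv_eq_one]
  exact ⟨fun ⟨h₁, h₂, h₃⟩ ↦ ⟨h₁, h₂, h₃⟩, fun ⟨h₁, h₂, h₃⟩ ↦ ⟨h₁, h₂, h₃⟩⟩

end Metacyclic

theorem satisfiesMetacyclicRels_of_zero_of_one (t : ℕ) :
    SatisfiesMetacyclicRels (3 ^ (t + 1)) (3 ^ t)
      (PresentedGroup.of 0 : PresentedGroup (hRels t)) (PresentedGroup.of 1) := by
  refine satisfiesMetacyclicRels_iff_lift_eq_one.2 fun r hr ↦ ?_
  have hmk : FreeGroup.lift ![PresentedGroup.of 0, PresentedGroup.of 1] =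
      PresentedGroup.mk (hRels t) := by
    ext i
    fin_cases i <;> rfl
  rw [hmk]
  exact PresentedGroup.one_of_mem hr

theorem PresentedGroup.closure_of_zero_one_eq_top (rels : Set (FreeGroup (Fin 2))) :
    Subgroup.closure {PresentedGroup.of 0, PresentedGroup.of 1} =
      (⊤ : Subgroup (PresentedGroup rels)) := by
  refine eq_top_iff.2 ((PresentedGroup.closure_range_of rels).ge.trans (Subgroup.closure_mono ?_))
  rintro _ ⟨i, rfl⟩
  fin_cases i <;> simp

theorem stmt_10 (t : ℕ) (ht : 0 < t) :
    ∃ φ : PresentedGroup (hRels t) ≃* PresentedGroup (hRels t),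
      φ (PresentedGroup.of 0) =
          (PresentedGroup.of 0 : PresentedGroup (hRels t)) ^ (2 * 3 ^ t + 1) *
            (PresentedGroup.of 1 : PresentedGroup (hRels t)) ^ (-3 : ℤ) ∧
      φ (PresentedGroup.of 1) =
          (PresentedGroup.of 0 : PresentedGroup (hRels t)) ^ (2 * 3 ^ t + 1) *
            (PresentedGroup.of 1 : PresentedGroup (hRels t)) ^ (-2 : ℤ) := by
  have hm := natCast_three_pow_mul_self_eq_zero ht
  have hgen := satisfiesMetacyclicRels_of_zero_of_one t
  have hφ := satisfiesMetacyclicRels_iff_lift_eq_one.1 <|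
    hgen.pow_mul_zpow_pair hm (three_mul_natCast_three_pow_eq_zero t) (Odd.pow (by decide))
  set φ := PresentedGroup.toGroup hφ
  have hφ0 : φ (PresentedGroup.of 0) = _ := PresentedGroup.toGroup.of hφ
  have hφ1 : φ (PresentedGroup.of 1) = _ := PresentedGroup.toGroup.of hφ
  have hb : PresentedGroup.of 1 ∈ φ.range := by
    rw [← hgen.inv_mul_eq_right hm]
    exact mul_mem (inv_mem ⟨_, hφ0⟩) ⟨_, hφ1⟩
  have ha : PresentedGroup.of 0 ∈ φ.range := by
    rw [← hgen.sq_mul_eq_left hm]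
    exact mul_mem (pow_mem hb 2) ⟨_, hφ1⟩
  have hsurj : Function.Surjective φ := by
    rw [← MonoidHom.range_eq_top, eq_top_iff, ← PresentedGroup.closure_of_zero_one_eq_top,
      Subgroup.closure_le, Set.insert_subset_iff, Set.singleton_subset_iff]
    exact ⟨ha, hb⟩
  have := hgen.finite_of_closure_eq_top hm (PresentedGroup.closure_of_zero_one_eq_top _)
  exact ⟨MulEquiv.ofBijective φ (Finite.surjective_iff_bijective.1 hsurj), hφ0, hφ1⟩
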